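/- arXiv:1912.12190 — 2 statements merged into one kernel-verified Lean document; each statement's English description precedes it below -/
import Mathlib

section
/- For α ∈ (0,1), ρ ∈ (0, 1/α], and t > 0, the function η ↦ Γ(ρ, η^α t)/Γ(ρ) is completely monotone on (0,∞). -/
open MeasureTheory Real Set Filter

/-- The upper incomplete gamma function `Γ(ρ, x) = ∫_x^∞ e^{-w} w^{ρ-1} dw`. -/
noncomputable def uGamma (ρ x : ℝ) : ℝ := ∫ w in Set.Ioi x, Real.exp (-w) * w ^ (ρ - 1)


/-- Coefficients in the explicit formula for iterated derivatives of
`η ↦ η^β * exp (-(t * η^α))`. -/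
noncomputable def co (α β t : ℝ) : ℕ → ℕ → ℝ
  | 0, 0 => 1
  | 0, _+1 => 0
  | (k+1), 0 => ((k : ℝ) - β) * co α β t k 0
  | (k+1), (m+1) => t * α * co α β t k m + ((k : ℝ) - β - ((m : ℝ) + 1) * α) * co α β t k (m+1)

lemma co_eq_zero (α β t : ℝ) : ∀ k m : ℕ, k < m → co α β t k m = 0 := by
  intro k
  induction k with
  | zero =>
    intro m hm
    match m, hm with
    | (m+1), _ => rfl
  | succ k ih =>
    intro m hm
    match m, hm with
    | (m+1), hm =>
      have h1 : k < m := by omega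
      have h2 : k < m + 1 := by omega
      show t * α * co α β t k m + ((k : ℝ) - β - ((m : ℝ) + 1) * α) * co α β t k (m+1) = 0
      rw [ih m h1, ih (m+1) h2]; ring

lemma co_nonneg {α β t : ℝ} (hα : 0 < α) (hα1 : α < 1) (hβ : β ≤ 0) (ht : 0 ≤ t) :
    ∀ k m : ℕ, 0 ≤ co α β t k m := by
  intro k
  induction k with
  | zero =>
    intro m
    match m with
    | 0 => norm_num [co]
    | (m+1) => simp [co]
  | succ k ih =>
    intro m
    match m with
    | 0 =>
      show 0 ≤ ((k : ℝ) - β) * co α β t k 0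
      have : (0:ℝ) ≤ (k : ℝ) - β := by
        have : (0:ℝ) ≤ (k:ℝ) := Nat.cast_nonneg k
        linarith
      exact mul_nonneg this (ih 0)
    | (m+1) =>
      show 0 ≤ t * α * co α β t k m + ((k : ℝ) - β - ((m : ℝ) + 1) * α) * co α β t k (m+1)
      rcases le_or_gt (m+1) k with h | h
      · have hc : (0:ℝ) ≤ (k : ℝ) - β - ((m : ℝ) + 1) * α := by
          have h1 : ((m : ℝ) + 1) * α ≤ ((m : ℝ) + 1) := by nlinarith
          have h2 : ((m : ℝ) + 1) ≤ (k : ℝ) := by exact_mod_cast h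
          linarith
        have := mul_nonneg (mul_nonneg ht hα.le) (ih m)
        nlinarith [mul_nonneg hc (ih (m+1))]
      · rw [co_eq_zero α β t k (m+1) h]
        have := mul_nonneg (mul_nonneg ht hα.le) (ih m)
        linarith


noncomputable def Sf (α β t : ℝ) (k : ℕ) (η : ℝ) : ℝ :=
  ∑ m ∈ Finset.range (k+1), co α β t k m * η ^ (β + m * α - k)

noncomputable def Hf (α β t : ℝ) (k : ℕ) (η : ℝ) : ℝ :=
  Sf α β t k η * Real.exp (-(t * η ^ α))

lemma Sf_identity (α β t : ℝ) (k : ℕ) {η : ℝ} (hη : 0 < η) :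
    Sf α β t (k+1) η + ∑ m ∈ Finset.range (k+1),
        co α β t k m * (β + m * α - k) * η ^ (β + m * α - k - 1)
      = t * α * η ^ (α - 1) * Sf α β t k η := by
  have hco0 : co α β t (k+1) 0 = ((k : ℝ) - β) * co α β t k 0 := rfl
  have hcoS : ∀ m : ℕ, co α β t (k+1) (m+1)
      = t * α * co α β t k m + ((k : ℝ) - β - ((m : ℝ) + 1) * α) * co α β t k (m+1) :=
    fun m => rfl
  rw [Sf, Sf, Finset.sum_range_succ'
      (fun m => co α β t (k+1) m * η ^ (β + m * α - ((k+1 : ℕ) : ℝ))) (k+1),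
    Finset.sum_range_succ'
      (fun m => co α β t k m * (β + m * α - k) * η ^ (β + m * α - k - 1)) k,
    Finset.mul_sum]
  have hzero : co α β t k (k+1) * (β + ((k+1 : ℕ) : ℝ) * α - k) * η ^ (β + ((k+1 : ℕ) : ℝ) * α - k - 1) = 0 := by
    rw [co_eq_zero α β t k (k+1) (by omega)]; ring
  have hext : (∑ m ∈ Finset.range k,
        co α β t k (m+1) * (β + ((m+1 : ℕ) : ℝ) * α - k) * η ^ (β + ((m+1 : ℕ) : ℝ) * α - k - 1))
      = ∑ m ∈ Finset.range (k+1),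
        co α β t k (m+1) * (β + ((m+1 : ℕ) : ℝ) * α - k) * η ^ (β + ((m+1 : ℕ) : ℝ) * α - k - 1) := by
    rw [Finset.sum_range_succ, hzero, add_zero]
  rw [hext]
  have key : ∀ m ∈ Finset.range (k+1),
      (co α β t (k+1) (m+1) * η ^ (β + ((m+1 : ℕ) : ℝ) * α - ((k+1 : ℕ) : ℝ))
        + co α β t k (m+1) * (β + ((m+1 : ℕ) : ℝ) * α - k) * η ^ (β + ((m+1 : ℕ) : ℝ) * α - k - 1))
      = t * α * η ^ (α - 1) * (co α β t k m * η ^ (β + m * α - k)) := by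
    intro m _
    rw [hcoS m]
    have e1 : (β + ((m+1 : ℕ) : ℝ) * α - ((k+1 : ℕ) : ℝ)) = (α - 1) + (β + (m : ℝ) * α - k) := by
      push_cast; ring
    have e2 : (β + ((m+1 : ℕ) : ℝ) * α - (k : ℝ) - 1) = (α - 1) + (β + (m : ℝ) * α - k) := by
      push_cast; ring
    rw [e1, e2, Real.rpow_add hη]
    push_cast
    ring
  have h2 := Finset.sum_congr rfl key
  rw [Finset.sum_add_distrib] at h2
  have h1 : co α β t (k+1) 0 * η ^ (β + ((0 : ℕ) : ℝ) * α - ((k+1 : ℕ) : ℝ))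
      + co α β t k 0 * (β + ((0 : ℕ) : ℝ) * α - k) * η ^ (β + ((0 : ℕ) : ℝ) * α - k - 1) = 0 := by
    rw [hco0]
    have e : (β + ((0 : ℕ) : ℝ) * α - ((k+1 : ℕ) : ℝ)) = (β + ((0 : ℕ) : ℝ) * α - k - 1) := by
      push_cast; ring
    rw [e]
    ring
  push_cast at h2 h1 ⊢
  linarith

lemma Sf_hasDerivAt (α β t : ℝ) (k : ℕ) {η : ℝ} (hη : 0 < η) :
    HasDerivAt (fun x => Sf α β t k x)
      (∑ m ∈ Finset.range (k+1), co α β t k m * (β + m * α - k) * η ^ (β + m * α - k - 1)) η := by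
  refine HasDerivAt.fun_sum fun m _ => ?_
  have h := (Real.hasDerivAt_rpow_const (x := η) (p := β + m * α - k) (Or.inl hη.ne')).const_mul
    (co α β t k m)
  refine h.congr_deriv ?_
  ring

lemma expn_hasDerivAt (α t : ℝ) {η : ℝ} (hη : 0 < η) :
    HasDerivAt (fun x : ℝ => Real.exp (-(t * x ^ α)))
      (-(t * α * η ^ (α - 1)) * Real.exp (-(t * η ^ α))) η := by
  have hinner : HasDerivAt (fun x : ℝ => -(t * x ^ α)) (-(t * (α * η ^ (α - 1)))) η :=
    ((Real.hasDerivAt_rpow_const (x := η) (p := α) (Or.inl hη.ne')).const_mul t).neg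
  have := hinner.exp
  convert this using 1
  ring

lemma Hf_hasDerivAt (α β t : ℝ) (k : ℕ) {η : ℝ} (hη : 0 < η) :
    HasDerivAt (fun x => Hf α β t k x) (-(Hf α β t (k+1) η)) η := by
  have h := (Sf_hasDerivAt α β t k hη).mul (expn_hasDerivAt α t hη)
  have hid := Sf_identity α β t k hη
  refine h.congr_deriv ?_
  unfold Hf
  nlinarith [hid, Real.exp_pos (-(t * η ^ α))]


lemma Hf_nonneg {α β t : ℝ} (hα : 0 < α) (hα1 : α < 1) (hβ : β ≤ 0) (ht : 0 ≤ t)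
    (k : ℕ) {η : ℝ} (hη : 0 < η) : 0 ≤ Hf α β t k η := by
  unfold Hf
  refine mul_nonneg (Finset.sum_nonneg fun m _ => mul_nonneg (co_nonneg hα hα1 hβ ht k m)
    (Real.rpow_nonneg hη.le _)) (Real.exp_pos _).le

lemma iteratedDeriv_Hf (α β t : ℝ) :
    ∀ k : ℕ, ∀ η : ℝ, 0 < η →
      iteratedDeriv k (fun x => Hf α β t 0 x) η = (-1) ^ k * Hf α β t k η := by
  intro k
  induction k with
  | zero => intro η hη; simp [iteratedDeriv_zero]
  | succ k ih =>
    intro η hη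
    rw [iteratedDeriv_succ]
    have hev : iteratedDeriv k (fun x => Hf α β t 0 x)
        =ᶠ[nhds η] fun x => (-1) ^ k * Hf α β t k x := by
      filter_upwards [isOpen_Ioi.mem_nhds (Set.mem_Ioi.mpr hη)] with x hx
      exact ih x hx
    rw [hev.deriv_eq]
    have h : HasDerivAt (fun x => (-1 : ℝ) ^ k * Hf α β t k x)
        ((-1) ^ k * -(Hf α β t (k+1) η)) η := (Hf_hasDerivAt α β t k hη).const_mul _
    rw [h.deriv]
    ring


lemma integ_Ioi {ρ : ℝ} (hρ : 0 < ρ) {a : ℝ} (ha : 0 ≤ a) :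
    IntegrableOn (fun w => Real.exp (-w) * w ^ (ρ - 1)) (Set.Ioi a) :=
  (Real.GammaIntegral_convergent hρ).mono_set (Set.Ioi_subset_Ioi ha)

lemma contOn_integrand {ρ : ℝ} :
    ContinuousOn (fun w : ℝ => Real.exp (-w) * w ^ (ρ - 1)) (Set.Ioi 0) := by
  intro x hx
  exact ((Real.continuous_exp.comp continuous_neg).continuousAt.mul
    (Real.continuousAt_rpow_const x (ρ - 1) (Or.inl (ne_of_gt hx)))).continuousWithinAt

lemma uGamma_split {ρ : ℝ} (hρ : 0 < ρ) {a b : ℝ} (ha : 0 < a) (hab : a ≤ b) :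
    uGamma ρ a = (∫ w in a..b, Real.exp (-w) * w ^ (ρ - 1)) + uGamma ρ b := by
  have hb : 0 < b := lt_of_lt_of_le ha hab
  rw [uGamma, uGamma, ← Set.Ioc_union_Ioi_eq_Ioi hab,
    setIntegral_union (Set.Ioc_disjoint_Ioi le_rfl) measurableSet_Ioi
      ((integ_Ioi hρ ha.le).mono_set Set.Ioc_subset_Ioi_self) (integ_Ioi hρ hb.le),
    intervalIntegral.integral_of_le hab]

lemma uGamma_eq {ρ : ℝ} (hρ : 0 < ρ) {y : ℝ} (hy : 0 < y) :
    uGamma ρ y = uGamma ρ 1 - ∫ w in (1:ℝ)..y, Real.exp (-w) * w ^ (ρ - 1) := by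
  rcases le_total y 1 with h | h
  · rw [intervalIntegral.integral_symm]
    have := uGamma_split hρ hy h
    linarith
  · have := uGamma_split hρ one_pos h
    linarith

lemma hasDerivAt_uGamma {ρ : ℝ} (hρ : 0 < ρ) {x : ℝ} (hx : 0 < x) :
    HasDerivAt (uGamma ρ) (-(Real.exp (-x) * x ^ (ρ - 1))) x := by
  have hint : IntervalIntegrable (fun w => Real.exp (-w) * w ^ (ρ - 1)) volume 1 x := by
    rw [intervalIntegrable_iff]
    refine (integ_Ioi hρ (le_of_lt (lt_min one_pos hx))).mono_set ?_
    exact fun w hw => hw.1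
  have hmeas : StronglyMeasurableAtFilter (fun w => Real.exp (-w) * w ^ (ρ - 1)) (nhds x) :=
    contOn_integrand.stronglyMeasurableAtFilter isOpen_Ioi x hx
  have hcont : ContinuousAt (fun w => Real.exp (-w) * w ^ (ρ - 1)) x :=
    (Real.continuous_exp.comp continuous_neg).continuousAt.mul
      (Real.continuousAt_rpow_const x (ρ - 1) (Or.inl (ne_of_gt hx)))
  have hI : HasDerivAt (fun y => ∫ w in (1:ℝ)..y, Real.exp (-w) * w ^ (ρ - 1))
      (Real.exp (-x) * x ^ (ρ - 1)) x :=
    intervalIntegral.integral_hasDerivAt_right hint hmeas hcont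
  have h2 : HasDerivAt (fun y => uGamma ρ 1 - ∫ w in (1:ℝ)..y, Real.exp (-w) * w ^ (ρ - 1))
      (-(Real.exp (-x) * x ^ (ρ - 1))) x := by
    exact ((hasDerivAt_const x (uGamma ρ 1)).sub hI).congr_deriv (by ring)
  refine h2.congr_of_eventuallyEq ?_
  filter_upwards [isOpen_Ioi.mem_nhds (Set.mem_Ioi.mpr hx)] with y hy
  exact uGamma_eq hρ hy


lemma analyticAt_rpow_const {x : ℝ} (hx : 0 < x) (p : ℝ) :
    AnalyticAt ℝ (fun y : ℝ => y ^ p) x := by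
  have h1 : AnalyticAt ℂ (fun z : ℂ => z ^ (p : ℂ)) (x : ℂ) :=
    analyticAt_id.cpow analyticAt_const (by
      exact Complex.ofReal_mem_slitPlane.mpr hx)
  have h2 : AnalyticAt ℝ (fun y : ℝ => (((y : ℂ)) ^ (p : ℂ)).re) x :=
    (Complex.reCLM.analyticAt _).comp ((h1.restrictScalars).comp (Complex.ofRealCLM.analyticAt x))
  simpa only [Real.rpow_def] using h2

lemma intOn {p c : ℝ} (hp : -1 < p) (hc : 0 < c) :
    IntegrableOn (fun v : ℝ => v ^ p * Real.exp (-(c * v))) (Set.Ioi (1:ℝ)) := by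
  have h0 : IntegrableOn (fun w => Real.exp (-w) * w ^ (p + 1 - 1)) (Set.Ioi c) :=
    (Real.GammaIntegral_convergent (by linarith)).mono_set (Set.Ioi_subset_Ioi hc.le)
  have h1 : IntegrableOn (fun v : ℝ => Real.exp (-(c * v)) * (c * v) ^ (p + 1 - 1))
      (Set.Ioi (1:ℝ)) := by
    have := (integrableOn_Ioi_comp_mul_left_iff
      (fun w => Real.exp (-w) * w ^ (p + 1 - 1)) 1 hc).mpr (by simpa using h0)
    simpa using this
  have h2 : IntegrableOn (fun v : ℝ => (c ^ p)⁻¹ * (Real.exp (-(c * v)) * (c * v) ^ (p + 1 - 1)))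
      (Set.Ioi (1:ℝ)) := h1.const_mul _
  refine h2.congr_fun (fun v hv => ?_) measurableSet_Ioi
  have hv0 : (0:ℝ) < v := lt_trans one_pos hv
  beta_reduce
  rw [show p + 1 - 1 = p by ring, Real.mul_rpow hc.le hv0.le]
  have hcp : c ^ p ≠ 0 := (Real.rpow_pos_of_pos hc p).ne'
  field_simp

noncomputable def Lc (ρ : ℝ) (z : ℂ) : ℂ :=
  ∫ v in Set.Ioi (1:ℝ), ((v ^ (ρ - 1) : ℝ) : ℂ) * Complex.exp (-(z * v))

lemma contOn_rpow (p : ℝ) : ContinuousOn (fun v : ℝ => v ^ p) (Set.Ioi (1:ℝ)) :=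
  fun v hv => (Real.continuousAt_rpow_const v p
    (Or.inl (ne_of_gt (lt_trans one_pos hv)))).continuousWithinAt

lemma Lc_hasDerivAt {ρ : ℝ} (hρ : 0 < ρ) {z₀ : ℂ} (hz : 0 < z₀.re) :
    DifferentiableAt ℂ (Lc ρ) z₀ := by
  set ε : ℝ := z₀.re / 2 with hε
  have hε0 : 0 < ε := by positivity
  set F : ℂ → ℝ → ℂ := fun z v => ((v ^ (ρ - 1) : ℝ) : ℂ) * Complex.exp (-(z * v)) with hF
  set F' : ℂ → ℝ → ℂ := fun z v => ((v ^ (ρ - 1) : ℝ) : ℂ) * (-(v : ℂ) * Complex.exp (-(z * v)))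
    with hF'
  have hcontF : ∀ z : ℂ, ContinuousOn (F z) (Set.Ioi (1:ℝ)) := by
    intro z
    exact (Complex.continuous_ofReal.comp_continuousOn (contOn_rpow (ρ - 1))).mul
      ((Complex.continuous_exp.comp
        ((continuous_const.mul Complex.continuous_ofReal).neg)).continuousOn)
  have hcontF' : ContinuousOn (F' z₀) (Set.Ioi (1:ℝ)) := by
    exact (Complex.continuous_ofReal.comp_continuousOn (contOn_rpow (ρ - 1))).mul
      ((Complex.continuous_ofReal.neg.mul (Complex.continuous_exp.comp
        ((continuous_const.mul Complex.continuous_ofReal).neg))).continuousOn)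
  have hre : ∀ z ∈ Metric.ball z₀ ε, ε ≤ z.re := by
    intro z hzb
    have h1 : |(z - z₀).re| ≤ ‖z - z₀‖ := Complex.abs_re_le_norm _
    have h2 : ‖z - z₀‖ < ε := by
      rw [Metric.mem_ball] at hzb
      simpa [Complex.dist_eq] using hzb
    have h3 : |z.re - z₀.re| < ε := by
      rw [← Complex.sub_re]; exact lt_of_le_of_lt h1 h2
    have := abs_lt.mp h3
    simp only [hε] at *
    linarith [this.1]
  have hnorm : ∀ (z : ℂ) (v : ℝ), 0 < v →
      ‖F z v‖ = v ^ (ρ - 1) * Real.exp (-(z.re * v)) := by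
    intro z v hv
    have hr : (-(z * (v:ℂ))).re = -(z.re * v) := by simp [Complex.mul_re]
    rw [hF]
    rw [norm_mul, Complex.norm_real, Real.norm_eq_abs, abs_of_nonneg (Real.rpow_nonneg hv.le _),
      Complex.norm_exp, hr]
  have hnorm' : ∀ (z : ℂ) (v : ℝ), 0 < v →
      ‖F' z v‖ = v ^ (ρ - 1) * (v * Real.exp (-(z.re * v))) := by
    intro z v hv
    have hr : (-(z * (v:ℂ))).re = -(z.re * v) := by simp [Complex.mul_re]
    rw [hF']
    rw [norm_mul, norm_mul, Complex.norm_real, Real.norm_eq_abs,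
      abs_of_nonneg (Real.rpow_nonneg hv.le _), norm_neg, Complex.norm_real, Real.norm_eq_abs,
      abs_of_nonneg hv.le, Complex.norm_exp, hr]
  have key := hasDerivAt_integral_of_dominated_loc_of_deriv_le (μ := volume.restrict (Set.Ioi 1))
    (F := F) (F' := F') (x₀ := z₀)
    (bound := fun v => v ^ ρ * Real.exp (-(ε * v))) (Metric.ball_mem_nhds z₀ hε0)
    (Eventually.of_forall fun z => ((hcontF z).aestronglyMeasurable measurableSet_Ioi))
    ?_ (hcontF'.aestronglyMeasurable measurableSet_Ioi) ?_ ?_ ?_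
  · exact (key.2).differentiableAt
  · -- integrability of F z₀
    refine Integrable.mono' (g := fun v => v ^ (ρ - 1) * Real.exp (-(ε * v)))
      (intOn (by linarith) hε0) ((hcontF z₀).aestronglyMeasurable measurableSet_Ioi) ?_
    rw [ae_restrict_iff' measurableSet_Ioi]
    refine Eventually.of_forall fun v hv => ?_
    have hv0 : (0:ℝ) < v := lt_trans one_pos hv
    rw [hnorm z₀ v hv0]
    have : Real.exp (-(z₀.re * v)) ≤ Real.exp (-(ε * v)) := by
      apply Real.exp_le_exp.mpr
      have : ε ≤ z₀.re := by rw [hε]; linarith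
      nlinarith
    exact mul_le_mul_of_nonneg_left this (Real.rpow_nonneg hv0.le _)
  · -- bound for F'
    rw [ae_restrict_iff' measurableSet_Ioi]
    refine Eventually.of_forall fun v hv z hzb => ?_
    have hv0 : (0:ℝ) < v := lt_trans one_pos hv
    rw [hnorm' z v hv0]
    have h1 : Real.exp (-(z.re * v)) ≤ Real.exp (-(ε * v)) := by
      apply Real.exp_le_exp.mpr
      have := hre z hzb
      nlinarith
    have h2 : v ^ (ρ - 1) * v = v ^ ρ := by
      rw [show ρ = ρ - 1 + 1 by ring, Real.rpow_add_one hv0.ne']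
      ring_nf
    calc v ^ (ρ - 1) * (v * Real.exp (-(z.re * v)))
        ≤ v ^ (ρ - 1) * (v * Real.exp (-(ε * v))) := by
          refine mul_le_mul_of_nonneg_left ?_ (Real.rpow_nonneg hv0.le _)
          exact mul_le_mul_of_nonneg_left h1 hv0.le
      _ = v ^ ρ * Real.exp (-(ε * v)) := by rw [← h2]; ring
  · exact intOn (by linarith) hε0
  · -- differentiability in z
    refine Eventually.of_forall fun v z _ => ?_
    have hinner : HasDerivAt (fun z : ℂ => -(z * v)) (-(v : ℂ)) z := by
      exact ((hasDerivAt_id z).mul_const (v : ℂ)).neg.congr_deriv (by ring)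
    have := (hinner.cexp).const_mul ((v ^ (ρ - 1) : ℝ) : ℂ)
    refine this.congr_deriv ?_
    ring

lemma Lc_analyticOnNhd {ρ : ℝ} (hρ : 0 < ρ) :
    AnalyticOnNhd ℂ (Lc ρ) {z : ℂ | 0 < z.re} :=
  DifferentiableOn.analyticOnNhd
    (fun z hz => (Lc_hasDerivAt hρ hz).differentiableWithinAt)
    (isOpen_lt continuous_const Complex.continuous_re)

noncomputable def Lr (ρ : ℝ) (x : ℝ) : ℝ :=
  ∫ v in Set.Ioi (1:ℝ), v ^ (ρ - 1) * Real.exp (-(x * v))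

lemma Lc_ofReal (ρ : ℝ) (x : ℝ) : Lc ρ (x : ℂ) = ((Lr ρ x : ℝ) : ℂ) := by
  rw [Lc, Lr,
    show ((∫ v in Set.Ioi (1:ℝ), v ^ (ρ - 1) * Real.exp (-(x * v)) : ℝ) : ℂ)
      = ∫ v in Set.Ioi (1:ℝ), ((v ^ (ρ - 1) * Real.exp (-(x * v)) : ℝ) : ℂ)
    from integral_ofReal.symm]
  refine setIntegral_congr_fun measurableSet_Ioi (fun v hv => ?_)
  push_cast
  ring

lemma Lr_analyticOnNhd {ρ : ℝ} (hρ : 0 < ρ) : AnalyticOnNhd ℝ (Lr ρ) (Set.Ioi 0) := by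
  intro x hx
  have h1 : AnalyticAt ℝ (fun y : ℝ => (Lc ρ (y : ℂ)).re) x :=
    (Complex.reCLM.analyticAt _).comp
      (((Lc_analyticOnNhd hρ _ (by simpa using (hx : (0:ℝ) < x))).restrictScalars).comp
        (Complex.ofRealCLM.analyticAt x))
  have heq : (fun y : ℝ => (Lc ρ (y : ℂ)).re) = Lr ρ := funext fun y => by
    rw [Lc_ofReal]; simp
  rwa [heq] at h1

lemma uGamma_repr {ρ : ℝ} (hρ : 0 < ρ) {x : ℝ} (hx : 0 < x) :
    uGamma ρ x = x ^ ρ * Lr ρ x := by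
  have h := integral_comp_mul_left_Ioi (fun w => Real.exp (-w) * w ^ (ρ - 1)) 1 hx
  rw [mul_one] at h
  have h2 : (∫ v in Set.Ioi (1:ℝ), Real.exp (-(x * v)) * (x * v) ^ (ρ - 1))
      = x ^ (ρ - 1) * Lr ρ x := by
    rw [Lr, ← integral_const_mul]
    refine setIntegral_congr_fun measurableSet_Ioi (fun v hv => ?_)
    have hv0 : (0:ℝ) < v := lt_trans one_pos hv
    rw [Real.mul_rpow hx.le hv0.le]
    ring
  have hxρ : x * x ^ (ρ - 1) = x ^ ρ := by
    nth_rewrite 1 [← Real.rpow_one x]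
    rw [← Real.rpow_add hx]
    ring_nf
  have : uGamma ρ x = x * ∫ v in Set.Ioi (1:ℝ), Real.exp (-(x * v)) * (x * v) ^ (ρ - 1) := by
    rw [h, smul_eq_mul, uGamma]
    field_simp
  rw [this, h2, ← mul_assoc, hxρ]

lemma main_analytic {α ρ t : ℝ} (hα : α ∈ Set.Ioo (0 : ℝ) 1) (hρ0 : 0 < ρ) (ht : 0 < t) :
    AnalyticOnNhd ℝ (fun η => uGamma ρ (η ^ α * t) / Real.Gamma ρ) (Set.Ioi 0) := by
  have hΓ : Real.Gamma ρ ≠ 0 := (Real.Gamma_pos_of_pos hρ0).ne'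
  have hg : AnalyticOnNhd ℝ (fun η : ℝ => ((η ^ α * t) ^ ρ * Lr ρ (η ^ α * t)) / Real.Gamma ρ)
      (Set.Ioi 0) := by
    intro η hη
    have hη0 : (0:ℝ) < η := hη
    have hin : AnalyticAt ℝ (fun η : ℝ => η ^ α * t) η :=
      (analyticAt_rpow_const hη0 α).mul analyticAt_const
    have hpos : (0:ℝ) < η ^ α * t := mul_pos (Real.rpow_pos_of_pos hη0 α) ht
    have h1 : AnalyticAt ℝ (fun y : ℝ => y ^ ρ) (η ^ α * t) := analyticAt_rpow_const hpos ρ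
    have h2 : AnalyticAt ℝ (Lr ρ) (η ^ α * t) := Lr_analyticOnNhd hρ0 _ hpos
    have h3 := AnalyticAt.comp (f := fun η : ℝ => η ^ α * t) (x := η) h1 hin
    have h4 := AnalyticAt.comp (f := fun η : ℝ => η ^ α * t) (x := η) h2 hin
    simp only [Function.comp_def] at h3 h4
    exact (h3.mul h4).div analyticAt_const hΓ
  refine hg.congr isOpen_Ioi (fun η hη => ?_)
  have hη0 : (0:ℝ) < η := hη
  rw [uGamma_repr hρ0 (mul_pos (Real.rpow_pos_of_pos hη0 α) ht)]

theorem laplace_transform_completely_monotone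
    (α ρ t : ℝ) (hα : α ∈ Set.Ioo (0 : ℝ) 1) (hρ : ρ ∈ Set.Ioc (0 : ℝ) (1 / α))
    (ht : 0 < t) :
    ContDiffOn ℝ (⊤ : ℕ∞) (fun η => uGamma ρ (η ^ α * t) / Real.Gamma ρ) (Set.Ioi 0) ∧
    ∀ (k : ℕ) (η : ℝ), 0 < η →
      0 ≤ (-1 : ℝ) ^ k * iteratedDeriv k (fun x => uGamma ρ (x ^ α * t) / Real.Gamma ρ) η := by
  obtain ⟨hα0, hα1⟩ := hα
  obtain ⟨hρ0, hρα⟩ := hρ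
  have hΓ : 0 < Real.Gamma ρ := Real.Gamma_pos_of_pos hρ0
  have hβ : α * ρ - 1 ≤ 0 := by
    have h1 : ρ * α ≤ 1 := (le_div_iff₀ hα0).mp hρα
    nlinarith
  set β : ℝ := α * ρ - 1 with hβdef
  set C : ℝ := α * t ^ ρ / Real.Gamma ρ with hCdef
  have hC : 0 ≤ C := by
    rw [hCdef]
    positivity
  set f : ℝ → ℝ := fun η => uGamma ρ (η ^ α * t) / Real.Gamma ρ with hfdef
  have hder : ∀ η : ℝ, 0 < η → HasDerivAt f (-C * Hf α β t 0 η) η := by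
    intro η hη
    have hx : 0 < η ^ α * t := mul_pos (Real.rpow_pos_of_pos hη α) ht
    have hinner : HasDerivAt (fun η : ℝ => η ^ α * t) (α * η ^ (α - 1) * t) η := by
      simpa using ((Real.hasDerivAt_rpow_const (x := η) (p := α) (Or.inl hη.ne')).mul_const t)
    have hcomp := ((hasDerivAt_uGamma hρ0 hx).comp η hinner).div_const (Real.Gamma ρ)
    have hfun : (fun x => (uGamma ρ ∘ fun η => η ^ α * t) x / Real.Gamma ρ) = f := by
      funext x
      simp [hfdef, Function.comp]
    rw [hfun] at hcomp
    refine hcomp.congr_deriv ?_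
    symm
    have e3 : (η ^ α * t) ^ (ρ - 1) = (η ^ α) ^ (ρ - 1) * t ^ (ρ - 1) :=
      Real.mul_rpow (Real.rpow_nonneg hη.le α) ht.le
    have e1 : η ^ β = (η ^ α) ^ (ρ - 1) * η ^ (α - 1) := by
      rw [← Real.rpow_mul hη.le, ← Real.rpow_add hη, hβdef]
      ring_nf
    have e2 : t ^ ρ = t ^ (ρ - 1) * t := by
      nth_rewrite 3 [← Real.rpow_one t]
      rw [← Real.rpow_add ht]
      ring_nf
    have e4 : Hf α β t 0 η = η ^ β * Real.exp (-(t * η ^ α)) := by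
      simp [Hf, Sf, co]
    have e5 : Real.exp (-(η ^ α * t)) = Real.exp (-(t * η ^ α)) := by ring_nf
    rw [e4, e3, e5, hCdef, e2, e1]
    field_simp
  have hiter : ∀ k : ℕ, ∀ η : ℝ, 0 < η →
      iteratedDeriv (k+1) f η = ((-1:ℝ) ^ (k+1) * C) * Hf α β t k η := by
    intro k
    induction k with
    | zero =>
      intro η hη
      rw [iteratedDeriv_one, (hder η hη).deriv]
      ring
    | succ k ih =>
      intro η hη
      rw [iteratedDeriv_succ]
      have hev : iteratedDeriv (k+1) f
          =ᶠ[nhds η] fun x => ((-1:ℝ) ^ (k+1) * C) * Hf α β t k x := by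
        filter_upwards [isOpen_Ioi.mem_nhds (Set.mem_Ioi.mpr hη)] with x hx using ih x hx
      rw [hev.deriv_eq, ((Hf_hasDerivAt α β t k hη).const_mul ((-1:ℝ) ^ (k+1) * C)).deriv]
      ring
  constructor
  · exact (main_analytic ⟨hα0, hα1⟩ hρ0 ht).contDiffOn (uniqueDiffOn_Ioi 0)
  · intro k η hη
    match k with
    | 0 =>
      simp only [pow_zero, one_mul, iteratedDeriv_zero]
      have h1 : 0 ≤ uGamma ρ (η ^ α * t) := by
        refine setIntegral_nonneg measurableSet_Ioi (fun w hw => ?_)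
        have hw0 : 0 < w := lt_trans (mul_pos (Real.rpow_pos_of_pos hη α) ht) hw
        positivity
      exact div_nonneg h1 hΓ.le
    | (k+1) =>
      rw [hiter k η hη]
      have hH := Hf_nonneg hα0 hα1 hβ ht.le k hη
      have h2 : ((-1:ℝ) ^ (k+1)) * ((-1:ℝ) ^ (k+1)) = 1 := by
        rw [← pow_add]
        exact Even.neg_one_pow ⟨k+1, by ring⟩
      calc (0:ℝ) = (((-1:ℝ) ^ (k+1)) * ((-1:ℝ) ^ (k+1))) * (C * Hf α β t k η) - C * Hf α β t k η := by
            rw [h2]; ring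
        _ ≤ (((-1:ℝ) ^ (k+1)) * ((-1:ℝ) ^ (k+1))) * (C * Hf α β t k η) := by
            nlinarith [mul_nonneg hC hH]
        _ = (-1:ℝ) ^ (k+1) * ((-1:ℝ) ^ (k+1) * C * Hf α β t k η) := by ring
end

section
/- For c > 0, the function h(x) = c³/(4x·√(π x³)) · e^{-c²/(4x)} on (0,∞) is a probability density, and its Laplace transform is ∫₀^∞ e^{-ηx} h(x) dx = e^{-c√η}(1 + c√η) = Γ(2, c√η)/Γ(2) for all η > 0. -/
/-!
On `(0, ∞)` we have `e^{-ηx} h(x) = (2k³/√π) e^{-(s²x + k²/x)} x^{-5/2}` with `s = √η`, `k = c/2`.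
Since `(s√x ± k/√x)² = s²x + k²/x ± 2sk`, this has an elementary antiderivative in terms of
`e^{-(s²x + k²/x)}/√x` and `erf (s√x ± k/√x)`; its limits at `0⁺` and `∞` give
`(1 + 2sk) e^{-2sk}`. Taking `η = 0` gives total mass `1`.
-/

open MeasureTheory Real

/-- Density of the generalized stable law with `α = 1/2`, `ρ = 2` and scale `c`. -/
noncomputable def genStableHalfTwo (c x : ℝ) : ℝ :=
  c ^ 3 / (4 * x * Real.sqrt (Real.pi * x ^ 3)) * Real.exp (-c ^ 2 / (4 * x))

open Filter Topology Set

noncomputable def erf (t : ℝ) : ℝ := 2 / √π * ∫ u in (0 : ℝ)..t, exp (-u ^ 2)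

lemma hasDerivAt_erf (t : ℝ) : HasDerivAt erf (2 / √π * exp (-t ^ 2)) t := by
  have hc : Continuous fun u : ℝ => exp (-u ^ 2) := by fun_prop
  exact (intervalIntegral.integral_hasDerivAt_right (hc.intervalIntegrable 0 t)
    hc.aestronglyMeasurable.stronglyMeasurableAtFilter hc.continuousAt).const_mul _

lemma continuous_erf : Continuous erf :=
  continuous_iff_continuousAt.2 fun t => (hasDerivAt_erf t).continuousAt

lemma erf_zero : erf 0 = 0 := by simp [erf]

lemma erf_neg (t : ℝ) : erf (-t) = -erf t := by
  have h := intervalIntegral.integral_comp_neg (a := 0) (b := t) fun u => exp (-u ^ 2)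
  simp only [neg_sq, neg_zero] at h
  rw [erf, erf, intervalIntegral.integral_symm, ← h, mul_neg]

lemma tendsto_erf_atTop : Tendsto erf atTop (𝓝 1) := by
  have hint : IntegrableOn (fun u : ℝ => exp (-u ^ 2)) (Ioi 0) := by
    simpa using (integrable_exp_neg_mul_sq one_pos).integrableOn
  have hval : ∫ u in Ioi (0 : ℝ), exp (-u ^ 2) = √π / 2 := by
    simpa using integral_gaussian_Ioi 1
  have := (intervalIntegral_tendsto_integral_Ioi 0 hint tendsto_id).const_mul (2 / √π)
  rwa [hval, div_mul_div_comm, mul_comm 2, div_self (by positivity)] at this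

lemma tendsto_erf_atBot : Tendsto erf atBot (𝓝 (-1)) := by
  simpa [Function.comp_def, erf_neg] using (tendsto_erf_atTop.comp tendsto_neg_atBot_atTop).neg

theorem integral_Ioi_of_hasDerivAt_of_nonneg_of_tendsto {f f' : ℝ → ℝ} {a A B : ℝ}
    (hderiv : ∀ x ∈ Ioi a, HasDerivAt f (f' x) x) (hf' : ∀ x ∈ Ioi a, 0 ≤ f' x)
    (hA : Tendsto f (𝓝[>] a) (𝓝 A)) (hB : Tendsto f atTop (𝓝 B)) :
    ∫ x in Ioi a, f' x = B - A := by
  classical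
  have hcont : ContinuousWithinAt (Function.update f a A) (Ici a) a := by
    rwa [continuousWithinAt_update_same, Ici_sdiff_left]
  have hderiv' : ∀ x ∈ Ioi a, HasDerivAt (Function.update f a A) (f' x) x := fun x hx =>
    (hderiv x hx).congr_of_eventuallyEq <| by
      filter_upwards [eventually_ne_nhds (ne_of_gt hx)] with y hy
      exact Function.update_of_ne hy _ _
  have hB' : Tendsto (Function.update f a A) atTop (𝓝 B) := hB.congr' <| by
    filter_upwards [eventually_ne_atTop a] with y hy
    exact (Function.update_of_ne hy _ _).symm
  rw [integral_Ioi_of_hasDerivAt_of_nonneg hcont hderiv' hf' hB', Function.update_self]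

lemma uGamma_two {y : ℝ} (hy : 0 ≤ y) : uGamma 2 y = exp (-y) * (1 + y) := by
  have hderiv : ∀ w ∈ Ioi y, HasDerivAt (fun w => -(exp (-w) * (1 + w)))
      (exp (-w) * w ^ ((2 : ℝ) - 1)) w := fun w _ => by
    refine (((hasDerivAt_neg w).exp.mul ((hasDerivAt_id w).const_add 1)).neg).congr_deriv ?_
    norm_num; ring
  have hnonneg : ∀ w ∈ Ioi y, 0 ≤ exp (-w) * w ^ ((2 : ℝ) - 1) := fun w hw => by
    have : 0 < w := hy.trans_lt hw
    positivity
  have htop : Tendsto (fun w => -(exp (-w) * (1 + w))) atTop (𝓝 0) := by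
    have h := (tendsto_exp_neg_atTop_nhds_zero.add (tendsto_pow_mul_exp_neg_atTop_nhds_zero 1)).neg
    rw [add_zero, neg_zero] at h
    exact h.congr fun w => by ring
  rw [uGamma, integral_Ioi_of_hasDerivAt_of_nonneg (by fun_prop : Continuous _).continuousWithinAt
    hderiv hnonneg htop]
  ring

lemma tendsto_sqrt_nhdsGT_zero : Tendsto (√·) (𝓝[>] 0) (𝓝[>] 0) :=
  tendsto_nhdsWithin_iff.2 ⟨tendsto_nhdsWithin_of_tendsto_nhds (continuous_sqrt.tendsto' 0 0 sqrt_zero),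
    eventually_nhdsWithin_of_forall fun _ hx => sqrt_pos.2 hx⟩

section LaplacePrimitive

variable {s k x : ℝ}

lemma hasDerivAt_sqrt_mul_add_div_sqrt (hx : 0 < x) :
    HasDerivAt (fun y => s * √y + k / √y) ((s - k / x) / (2 * √x)) x := by
  have hsqrt := hasDerivAt_sqrt hx.ne'
  have h := (hsqrt.const_mul s).fun_add ((hsqrt.inv (sqrt_pos.2 hx).ne').const_mul k)
  simp only [Pi.inv_apply, ← div_eq_mul_inv] at h
  refine h.congr_deriv ?_
  have := sq_sqrt hx.le
  field_simp
  rw [this]; ring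

lemma hasDerivAt_erf_sqrt_mul_add_div_sqrt (hx : 0 < x) :
    HasDerivAt (fun y => erf (s * √y + k / √y))
      (exp (-(2 * s * k)) * exp (-(s ^ 2 * x + k ^ 2 / x)) * (s - k / x) / (√π * √x)) x := by
  have hsq : (s * √x + k / √x) ^ 2 = s ^ 2 * x + k ^ 2 / x + 2 * s * k := by
    have : √x ≠ 0 := (sqrt_pos.2 hx).ne'
    field_simp
    rw [sq_sqrt hx.le]; ring
  refine ((hasDerivAt_erf _).comp x (hasDerivAt_sqrt_mul_add_div_sqrt hx)).congr_deriv ?_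
  rw [hsq, ← exp_add]
  field_simp
  ring_nf

lemma hasDerivAt_exp_div_sqrt (hx : 0 < x) :
    HasDerivAt (fun y => exp (-(s ^ 2 * y + k ^ 2 / y)) / √y)
      (exp (-(s ^ 2 * x + k ^ 2 / x)) * (k ^ 2 / x ^ 2 - s ^ 2 - 1 / (2 * x)) / √x) x := by
  have h := ((hasDerivAt_id x).const_mul (s ^ 2)).fun_add
    ((hasDerivAt_inv hx.ne').const_mul (k ^ 2))
  simp only [← div_eq_mul_inv, id] at h
  refine (h.fun_neg.exp.div (hasDerivAt_sqrt hx.ne') (sqrt_pos.2 hx).ne').congr_deriv ?_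
  have := sq_sqrt hx.le
  field_simp
  rw [this]; ring

-- The `erf` terms cancel the `x^{-1/2}` and `x^{-3/2}` terms in the derivative of the first one.
noncomputable def laplacePrimitive (s k x : ℝ) : ℝ :=
  2 * k / √π * (exp (-(s ^ 2 * x + k ^ 2 / x)) / √x)
    + (s * k - 1 / 2) * exp (2 * s * k) * erf (s * √x + k / √x)
    + (s * k + 1 / 2) * exp (-(2 * s * k)) * erf (s * √x + -k / √x)

lemma hasDerivAt_laplacePrimitive (hx : 0 < x) :
    HasDerivAt (laplacePrimitive s k)
      (2 * k ^ 3 / √π * (exp (-(s ^ 2 * x + k ^ 2 / x)) / (x ^ 2 * √x))) x := by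
  have hplus := (hasDerivAt_erf_sqrt_mul_add_div_sqrt (s := s) (k := k) hx).const_mul
    ((s * k - 1 / 2) * exp (2 * s * k))
  have hminus := (hasDerivAt_erf_sqrt_mul_add_div_sqrt (s := s) (k := -k) hx).const_mul
    ((s * k + 1 / 2) * exp (-(2 * s * k)))
  refine ((((hasDerivAt_exp_div_sqrt hx).const_mul (2 * k / √π)).fun_add hplus).fun_add
    hminus).congr_deriv ?_
  have hexp : exp (2 * k * s) * exp (-(2 * k * s)) = 1 := by rw [← exp_add]; simp
  have := sq_sqrt hx.le
  have : 0 < √π := sqrt_pos.2 pi_pos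
  field_simp
  linear_combination (x * (4 * k * s ^ 2 * x + 2 * k)) * hexp

lemma tendsto_exp_div_sqrt_nhdsGT_zero (hk : k ≠ 0) :
    Tendsto (fun x => exp (-(s ^ 2 * x + k ^ 2 / x)) / √x) (𝓝[>] 0) (𝓝 0) := by
  have hdecay := (tendsto_rpow_mul_exp_neg_mul_atTop_nhds_zero (1 / 2) (k ^ 2)
    (by positivity)).comp tendsto_inv_nhdsGT_zero
  have hone : Tendsto (fun x => exp (-(s ^ 2 * x))) (𝓝[>] 0) (𝓝 1) :=
    tendsto_nhdsWithin_of_tendsto_nhds <|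
      (by fun_prop : Continuous fun x => exp (-(s ^ 2 * x))).tendsto' 0 1 (by simp)
  have h := hone.mul hdecay
  rw [mul_zero] at h
  refine h.congr' ?_
  filter_upwards [self_mem_nhdsWithin] with x (hx : 0 < x)
  rw [Function.comp_apply, ← sqrt_eq_rpow, sqrt_inv, neg_add, exp_add, div_eq_mul_inv (k ^ 2),
    neg_mul]
  ring

lemma tendsto_exp_div_sqrt_atTop :
    Tendsto (fun x => exp (-(s ^ 2 * x + k ^ 2 / x)) / √x) atTop (𝓝 0) := by
  refine squeeze_zero' ?_ ?_ (tendsto_inv_atTop_zero.comp tendsto_sqrt_atTop)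
  · filter_upwards [eventually_gt_atTop 0] with x hx
    positivity
  · filter_upwards [eventually_gt_atTop 0] with x hx
    rw [Function.comp_apply, div_eq_mul_inv]
    refine mul_le_of_le_one_left (by positivity) (exp_le_one_iff.2 ?_)
    have : 0 ≤ k ^ 2 / x := by positivity
    nlinarith [sq_nonneg s]

lemma tendsto_sqrt_mul_add_div_sqrt_nhdsGT_zero (hk : 0 < k) :
    Tendsto (fun x => s * √x + k / √x) (𝓝[>] 0) atTop := by
  have hfirst : Tendsto (fun x => s * √x) (𝓝[>] 0) (𝓝 0) :=
    tendsto_nhdsWithin_of_tendsto_nhds <|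
      (continuous_const.mul continuous_sqrt).tendsto' 0 0 (by simp)
  refine hfirst.add_atTop ?_
  simpa [div_eq_mul_inv] using
    (tendsto_inv_nhdsGT_zero.comp tendsto_sqrt_nhdsGT_zero).const_mul_atTop hk

lemma tendsto_div_sqrt_atTop : Tendsto (fun x => k / √x) atTop (𝓝 0) := by
  simpa [div_eq_mul_inv] using (tendsto_inv_atTop_zero.comp tendsto_sqrt_atTop).const_mul k

lemma tendsto_sqrt_mul_add_div_sqrt_atTop (hs : 0 < s) :
    Tendsto (fun x => s * √x + k / √x) atTop atTop :=
  (tendsto_sqrt_atTop.const_mul_atTop hs).atTop_add tendsto_div_sqrt_atTop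

lemma tendsto_laplacePrimitive_nhdsGT_zero (hk : 0 < k) :
    Tendsto (laplacePrimitive s k) (𝓝[>] 0)
      (𝓝 ((s * k - 1 / 2) * exp (2 * s * k) - (s * k + 1 / 2) * exp (-(2 * s * k)))) := by
  have hplus := tendsto_erf_atTop.comp (tendsto_sqrt_mul_add_div_sqrt_nhdsGT_zero (s := s) hk)
  have hneg : Tendsto (fun x => s * √x + -k / √x) (𝓝[>] 0) atBot :=
    (tendsto_neg_atTop_atBot.comp (tendsto_sqrt_mul_add_div_sqrt_nhdsGT_zero (s := -s) hk)).congr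
      fun x => by simp only [Function.comp_apply]; ring
  have hminus := tendsto_erf_atBot.comp hneg
  convert (((tendsto_exp_div_sqrt_nhdsGT_zero hk.ne').const_mul (2 * k / √π)).add
    (hplus.const_mul ((s * k - 1 / 2) * exp (2 * s * k)))).add
    (hminus.const_mul ((s * k + 1 / 2) * exp (-(2 * s * k)))) using 1
  · rfl
  · congr 1; ring

lemma tendsto_laplacePrimitive_atTop (hs : 0 ≤ s) :
    Tendsto (laplacePrimitive s k) atTop
      (𝓝 ((s * k - 1 / 2) * exp (2 * s * k) + (s * k + 1 / 2) * exp (-(2 * s * k)))) := by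
  have hfirst := (tendsto_exp_div_sqrt_atTop (s := s) (k := k)).const_mul (2 * k / √π)
  rcases hs.lt_or_eq with hs | rfl
  · have hplus := tendsto_erf_atTop.comp (tendsto_sqrt_mul_add_div_sqrt_atTop (k := k) hs)
    have hminus := tendsto_erf_atTop.comp (tendsto_sqrt_mul_add_div_sqrt_atTop (k := -k) hs)
    convert ((hfirst.add (hplus.const_mul ((s * k - 1 / 2) * exp (2 * s * k)))).add
      (hminus.const_mul ((s * k + 1 / 2) * exp (-(2 * s * k))))) using 1
    · rfl
    · congr 1; ring
  · have herf (k : ℝ) : Tendsto (fun x => erf (0 * √x + k / √x)) atTop (𝓝 0) :=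
      (continuous_erf.tendsto' 0 0 erf_zero).comp (by simpa using tendsto_div_sqrt_atTop)
    convert ((hfirst.add ((herf k).const_mul ((0 * k - 1 / 2) * exp (2 * 0 * k)))).add
      ((herf (-k)).const_mul ((0 * k + 1 / 2) * exp (-(2 * 0 * k))))) using 1
    · rfl
    · congr 1; norm_num

theorem integral_Ioi_exp_neg_add_div_div_sq_mul_sqrt (hs : 0 ≤ s) (hk : 0 < k) :
    ∫ x in Ioi 0, 2 * k ^ 3 / √π * (exp (-(s ^ 2 * x + k ^ 2 / x)) / (x ^ 2 * √x))
      = (1 + 2 * s * k) * exp (-(2 * s * k)) := by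
  rw [integral_Ioi_of_hasDerivAt_of_nonneg_of_tendsto (fun x hx => hasDerivAt_laplacePrimitive hx)
    (fun x (hx : 0 < x) => by positivity) (tendsto_laplacePrimitive_nhdsGT_zero hk)
    (tendsto_laplacePrimitive_atTop hs)]
  ring

end LaplacePrimitive

lemma exp_neg_mul_mul_genStableHalfTwo {c η x : ℝ} (hη : 0 ≤ η) (hx : 0 < x) :
    exp (-η * x) * genStableHalfTwo c x
      = 2 * (c / 2) ^ 3 / √π * (exp (-(√η ^ 2 * x + (c / 2) ^ 2 / x)) / (x ^ 2 * √x)) := by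
  have hsqrt : √(π * x ^ 3) = √π * (x * √x) := by
    rw [sqrt_mul pi_pos.le, pow_succ, sqrt_mul (by positivity), sqrt_sq hx.le]
  rw [genStableHalfTwo, hsqrt, sq_sqrt hη, neg_add, exp_add]
  have : 0 < √x := sqrt_pos.2 hx
  have : 0 < √π := sqrt_pos.2 pi_pos
  field_simp
  ring_nf

lemma integral_exp_neg_mul_genStableHalfTwo {c η : ℝ} (hc : 0 < c) (hη : 0 ≤ η) :
    ∫ x in Ioi 0, exp (-η * x) * genStableHalfTwo c x = exp (-(c * √η)) * (1 + c * √η) := by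
  rw [setIntegral_congr_fun measurableSet_Ioi fun x hx => exp_neg_mul_mul_genStableHalfTwo hη hx,
    integral_Ioi_exp_neg_add_div_div_sq_mul_sqrt (sqrt_nonneg η) (half_pos hc)]
  ring_nf

theorem genStableHalfTwo_density_and_laplace (c : ℝ) (hc : 0 < c) :
    (∀ x : ℝ, 0 < x → 0 ≤ genStableHalfTwo c x) ∧
    (∫ x in Set.Ioi (0 : ℝ), genStableHalfTwo c x = 1) ∧
    ∀ η : ℝ, 0 < η →
      (∫ x in Set.Ioi (0 : ℝ), Real.exp (-η * x) * genStableHalfTwo c x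
          = Real.exp (-(c * Real.sqrt η)) * (1 + c * Real.sqrt η)) ∧
      (∫ x in Set.Ioi (0 : ℝ), Real.exp (-η * x) * genStableHalfTwo c x
          = uGamma 2 (c * Real.sqrt η) / Real.Gamma 2) := by
  have hlaplace (η : ℝ) (hη : 0 ≤ η) := integral_exp_neg_mul_genStableHalfTwo hc hη
  refine ⟨fun x hx => by unfold genStableHalfTwo; positivity, by simpa using hlaplace 0 le_rfl,
    fun η hη => ⟨hlaplace η hη.le, ?_⟩⟩
  rw [hlaplace η hη.le, uGamma_two (by positivity), Gamma_two, div_one]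
end
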